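/- For a run [i..j] of smallest period p in a word w, the lexicographically greatest proper suffix w[k..j] of the run factor satisfies j - k + 1 ≥ p, i.e., it contains at least a full period of the run. -/

import Mathlib

open List

universe u

/-- The factor `w[i..j]` of a word (inclusive positions). -/
def factor {α : Type u} (w : List α) (i j : ℕ) : List α := (w.drop i).take (j - i + 1)

/-- `p` is a period length of the word `u`. -/
def HasPeriodLen {α : Type u} (u : List α) (p : ℕ) : Prop :=
  1 ≤ p ∧ ∀ k, k + p < u.length → u[k]? = u[k + p]?

/-- The smallest period of a word. -/
noncomputable def minPeriod {α : Type u} (u : List α) : ℕ := sInf {p | HasPeriodLen u p}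

/-- `[i..j]` is a run in `w`: the factor is periodic with smallest period at most half
its length, and the periodicity extends neither to the left nor to the right. -/
def IsRun {α : Type u} (w : List α) (i j : ℕ) : Prop :=
  i < j ∧ j < w.length ∧
  2 * minPeriod (factor w i j) ≤ j - i + 1 ∧
  (0 < i → minPeriod (factor w i j) < minPeriod (factor w (i - 1) j)) ∧
  (j + 1 < w.length → minPeriod (factor w i j) < minPeriod (factor w i (j + 1)))
/-- `k` is the starting position of the greatest proper suffix of the factor `w[i..j]`,
with respect to the strict order `lt` on words. -/
def IsGreatestProperSuffixPos {α : Type u} (lt : List α → List α → Prop)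
    (w : List α) (i j k : ℕ) : Prop :=
  i < k ∧ k ≤ j ∧ ∀ k', i < k' → k' ≤ j → k' ≠ k → lt (factor w k' j) (factor w k j)

/-!
Proof idea: if the suffix `w[k..j]` were shorter than the period `p`, then `k - p` would still
be an inner position of the run, because the run has length at least `2p`. By periodicity,
`w[k..j]` is a proper prefix of `w[k-p..j]`, hence lexicographically smaller, contradicting the
maximality of `w[k..j]`.
-/

theorem List.lex_take_of_lt_length {α : Type u} (r : α → α → Prop) {l : List α} {n : ℕ}
    (hn : n < l.length) : List.Lex r (l.take n) l := by
  obtain ⟨a, t, hdrop⟩ := List.exists_cons_of_ne_nil (l := l.drop n) (by simpa using hn)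
  conv_rhs => rw [← List.take_append_drop n l, hdrop]
  simpa using List.Lex.append_left r List.Lex.nil (l.take n)

theorem hasPeriodLen_minPeriod {α : Type u} (u : List α) : HasPeriodLen u (minPeriod u) :=
  Nat.sInf_mem (s := {p | HasPeriodLen u p}) ⟨u.length + 1, by constructor <;> omega⟩

section Factor

variable {α : Type u} (w : List α)

theorem factor_length {a j : ℕ} (haj : a ≤ j) (hj : j < w.length) :
    (factor w a j).length = j - a + 1 := by
  simp only [factor, List.length_take, List.length_drop]
  omega

theorem factor_getElem? {a j s : ℕ} (hs : s ≤ j - a) : (factor w a j)[s]? = w[a + s]? := by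
  rw [factor, List.getElem?_take_of_lt (by omega), List.getElem?_drop]

variable {w} {i j p : ℕ}

theorem HasPeriodLen.getElem?_add_factor (hper : HasPeriodLen (factor w i j) p)
    (hj : j < w.length) {n : ℕ} (hin : i ≤ n) (hnj : n + p ≤ j) : w[n]? = w[n + p]? := by
  have hlen := factor_length w (by omega : i ≤ j) hj
  have hshift := hper.2 (n - i) (by omega)
  rwa [factor_getElem? w (by omega), factor_getElem? w (by omega),
    show i + (n - i) = n by omega, show i + (n - i + p) = n + p by omega] at hshift

theorem HasPeriodLen.take_factor_eq_factor_add (hper : HasPeriodLen (factor w i j) p)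
    (hj : j < w.length) {a : ℕ} (hia : i ≤ a) (haj : a + p ≤ j) :
    (factor w a j).take (j - (a + p) + 1) = factor w (a + p) j := by
  apply List.ext_getElem?
  intro s
  by_cases hs : s ≤ j - (a + p)
  · rw [List.getElem?_take_of_lt (by omega), factor_getElem? w (by omega),
      factor_getElem? w hs, hper.getElem?_add_factor hj (by omega) (by omega)]
    congr 1
    omega
  · rw [List.getElem?_take_eq_none (by omega), eq_comm, List.getElem?_eq_none]
    rw [factor_length w (by omega) hj]
    omega

theorem HasPeriodLen.lex_factor_add (r : α → α → Prop) (hper : HasPeriodLen (factor w i j) p)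
    (hj : j < w.length) {a : ℕ} (hia : i ≤ a) (haj : a + p ≤ j) :
    List.Lex r (factor w (a + p) j) (factor w a j) := by
  rw [← hper.take_factor_eq_factor_add hj hia haj]
  apply List.lex_take_of_lt_length
  have := hper.1
  rw [factor_length w (by omega) hj]
  omega

end Factor

/-- The lexicographically greatest proper suffix `w[k..j]` of a run factor contains at
least a full period of the run: `j - k + 1 ≥ p`. -/
theorem greatest_proper_suffix_ge_period {α : Type u} [LinearOrder α] (w : List α)
    (i j k : ℕ) (h : IsRun w i j)
    (hk : IsGreatestProperSuffixPos (List.Lex (· < ·)) w i j k) :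
    minPeriod (factor w i j) ≤ j - k + 1 := by
  by_contra! hshort
  obtain ⟨hij, hjw, hhalf, -, -⟩ := h
  obtain ⟨hik, hkj, hmax⟩ := hk
  have hper := hasPeriodLen_minPeriod (factor w i j)
  set p := minPeriod (factor w i j)
  obtain ⟨a, rfl⟩ : ∃ a, k = a + p := ⟨k - p, by omega⟩
  have hia : i < a := by omega
  have hprefix_lt := hper.lex_factor_add (· < ·) hjw hia.le hkj
  exact Std.Asymm.asymm _ _ hprefix_lt (hmax a hia (by omega) (by omega))
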